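/- Average conjugated outer product over Hamming-weight-preserving unitaries (Eq. (eq:avg-rhoxx)): let n, w, w' : ℕ, let G be the subgroup of Matrix.unitaryGroup (Fin n → Bool) ℂ consisting of all U that commute with Q := Matrix.diagonal (fun f => ((wt f : ℕ) : ℂ)), and let μ be a bi-invariant probability measure on G. Let u, v : (Fin n → Bool) → ℂ satisfy u f = 0 whenever wt f ≠ w and v f = 0 whenever wt f ≠ w', and let M : Matrix (Fin n → Bool) (Fin n → Bool) ℂ be M f g = u f * star (v g). Then ∫ U, ↑U * M * (↑U)ᴴ ∂μ = if w = w' then ((∑ f, star (v f) * u f) / (n.choose w : ℂ)) • Π else 0, where Π := Matrix.diagonal (fun f => if wt f = w then (1 : ℂ) else 0) is the projector onto the subspace of Hamming weight w. -/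

import Mathlib

open Matrix MeasureTheory

/-- Entrywise (Borel) measurable structure on complex matrices. -/
noncomputable instance matrixMeasurableSpace {m n : Type*} : MeasurableSpace (Matrix m n ℂ) :=
  inferInstanceAs (MeasurableSpace (m → n → ℂ))

/-- The Hamming weight of a basis state of `m` qubits. -/
def wt {m : ℕ} (f : Fin m → Bool) : ℕ := (Finset.univ.filter (fun i => f i = true)).card

/-- The Hamming-weight (charge) operator on `n` qubits. -/
noncomputable def Qn (n : ℕ) : Matrix (Fin n → Bool) (Fin n → Bool) ℂ :=
  Matrix.diagonal (fun f => ((wt f : ℕ) : ℂ))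

/-- The subgroup of the unitary group on `n` qubits consisting of the unitaries commuting with
the Hamming-weight operator, i.e. the charge-conserving unitaries. -/
noncomputable def u1SymmetricGroup (n : ℕ) : Subgroup (Matrix.unitaryGroup (Fin n → Bool) ℂ) where
  carrier := {U | (U : Matrix (Fin n → Bool) (Fin n → Bool) ℂ) * Qn n =
    Qn n * (U : Matrix _ _ ℂ)}
  one_mem' := by simp
  mul_mem' := by
    intro a b ha hb
    have hab : ((a * b : Matrix.unitaryGroup (Fin n → Bool) ℂ) :
        Matrix (Fin n → Bool) (Fin n → Bool) ℂ) = (a : Matrix _ _ ℂ) * (b : Matrix _ _ ℂ) := rfl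
    show ((a * b : Matrix.unitaryGroup (Fin n → Bool) ℂ) : Matrix _ _ ℂ) * Qn n =
      Qn n * ((a * b : Matrix.unitaryGroup (Fin n → Bool) ℂ) : Matrix _ _ ℂ)
    rw [hab, mul_assoc, hb, ← mul_assoc, ha, mul_assoc]
  inv_mem' := by
    intro a ha
    set A : Matrix (Fin n → Bool) (Fin n → Bool) ℂ :=
      ((a : Matrix.unitaryGroup (Fin n → Bool) ℂ) : Matrix (Fin n → Bool) (Fin n → Bool) ℂ)
      with hA
    set B : Matrix (Fin n → Bool) (Fin n → Bool) ℂ :=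
      ((a⁻¹ : Matrix.unitaryGroup (Fin n → Bool) ℂ) : Matrix (Fin n → Bool) (Fin n → Bool) ℂ)
      with hB
    have h1 : B * A = 1 := by
      have := congrArg (fun x : Matrix.unitaryGroup (Fin n → Bool) ℂ =>
        (x : Matrix (Fin n → Bool) (Fin n → Bool) ℂ)) (inv_mul_cancel a)
      simpa [hA, hB] using this
    have h2 : A * B = 1 := by
      have := congrArg (fun x : Matrix.unitaryGroup (Fin n → Bool) ℂ =>
        (x : Matrix (Fin n → Bool) (Fin n → Bool) ℂ)) (mul_inv_cancel a)
      simpa [hA, hB] using this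
    have ha' : A * Qn n = Qn n * A := ha
    show B * Qn n = Qn n * B
    calc B * Qn n = B * Qn n * (A * B) := by rw [h2, mul_one]
      _ = B * (Qn n * A) * B := by simp only [mul_assoc]
      _ = B * (A * Qn n) * B := by rw [← ha']
      _ = (B * A) * (Qn n * B) := by simp only [mul_assoc]
      _ = Qn n * B := by rw [h1, one_mul]

/-!
Left invariance of `μ` makes the twirl `T = ∫ U M Uᴴ dμ` commute with every charge-conserving
unitary. Conjugating by the diagonal sign unitaries `diag ((-1) ^ f k)` kills the off-diagonal
entries of `T`, and conjugating by the permutation matrix of a transposition of two basis states of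
equal weight shows that the diagonal of `T` is constant on each weight sector. Since every `U`
preserves the weight sectors, `T f f` vanishes unless `wt f = w = w'`, and then the trace
`tr T = tr M = ⟨v|u⟩` is spread evenly over the `C(n, w)` basis states of weight `w`.
-/

namespace Matrix

variable {ι : Type*} [Fintype ι]

lemma mul_mul_conjTranspose_apply (A B C : Matrix ι ι ℂ) (i j : ι) :
    (A * B * Cᴴ) i j = ∑ b, ∑ a, A i a * B a b * star (C j b) := by
  simp only [mul_apply, conjTranspose_apply, Finset.sum_mul]

variable [DecidableEq ι]

lemma apply_eq_zero_of_commute_diagonal {U : Matrix ι ι ℂ} {q : ι → ℂ}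
    (hU : U * diagonal q = diagonal q * U) {i j : ι} (hij : q i ≠ q j) : U i j = 0 := by
  have h := congr_fun₂ hU i j
  rw [mul_diagonal, diagonal_mul] at h
  exact (mul_eq_mul_left_iff.1 (h.trans (mul_comm _ _))).resolve_left hij.symm

lemma diagonal_mem_unitaryGroup {d : ι → ℂ} (hd : ∀ i, star (d i) * d i = 1) :
    diagonal d ∈ unitaryGroup ι ℂ := by
  rw [mem_unitaryGroup_iff', star_eq_conjTranspose, diagonal_conjTranspose,
    diagonal_mul_diagonal, ← diagonal_one]
  exact congr_arg diagonal (funext hd)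

lemma permMatrix_mem_unitaryGroup (σ : Equiv.Perm ι) :
    σ.permMatrix ℂ ∈ unitaryGroup ι ℂ := by
  rw [mem_unitaryGroup_iff', star_eq_conjTranspose, conjTranspose_permMatrix, ← permMatrix_mul,
    mul_inv_cancel, permMatrix_one]

lemma apply_eq_zero_of_diagonal_conj_eq {T : Matrix ι ι ℂ} {d : ι → ℂ}
    (hT : diagonal d * T * (diagonal d)ᴴ = T) {i j : ι} (hij : d i * star (d j) ≠ 1) :
    T i j = 0 := by
  have h := congr_fun₂ hT i j
  rw [diagonal_conjTranspose, mul_diagonal, diagonal_mul, Pi.star_apply] at h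
  have : (d i * star (d j) - 1) * T i j = 0 := by linear_combination h
  exact (mul_eq_zero.1 this).resolve_left (sub_ne_zero.2 hij)

lemma apply_perm_of_permMatrix_conj_eq {T : Matrix ι ι ℂ} {σ : Equiv.Perm ι}
    (hT : σ.permMatrix ℂ * T * (σ.permMatrix ℂ)ᴴ = T) (i j : ι) : T (σ i) (σ j) = T i j := by
  rw [← congr_fun₂ hT i j, conjTranspose_permMatrix, PEquiv.toMatrix_toPEquiv_mul,
    Equiv.Perm.permMatrix, PEquiv.mul_toMatrix_toPEquiv]
  simp [Equiv.Perm.inv_def]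

end Matrix

lemma MeasureTheory.integral_comp_eq_of_map_eq {α E : Type*} [MeasurableSpace α]
    [NormedAddCommGroup E] [NormedSpace ℝ E] {μ : Measure α} [NeZero μ] {φ : α → α}
    (hφ : μ.map φ = μ) {F : α → E} (hF : AEStronglyMeasurable F μ) :
    ∫ x, F (φ x) ∂μ = ∫ x, F x ∂μ := by
  have hφm : AEMeasurable φ μ := AEMeasurable.of_map_ne_zero (by rw [hφ]; exact NeZero.ne μ)
  rw [← integral_map hφm (hφ.symm ▸ hF), hφ]

section Twirl

variable {ι : Type*} [Fintype ι] [DecidableEq ι] {H : Subgroup (unitaryGroup ι ℂ)}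

noncomputable def twirl (μ : Measure H) (X : Matrix ι ι ℂ) : Matrix ι ι ℂ :=
  of fun i j => ∫ U : H, (((U : unitaryGroup ι ℂ) : Matrix ι ι ℂ) * X *
    ((U : unitaryGroup ι ℂ) : Matrix ι ι ℂ)ᴴ) i j ∂μ

variable (H) in
def IsConjInvariant (T : Matrix ι ι ℂ) : Prop :=
  ∀ P : H,
    ((P : unitaryGroup ι ℂ) : Matrix ι ι ℂ) * T * ((P : unitaryGroup ι ℂ) : Matrix ι ι ℂ)ᴴ = T

lemma measurable_coe_apply (i j : ι) :
    Measurable fun U : H => ((U : unitaryGroup ι ℂ) : Matrix ι ι ℂ) i j :=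
  (measurable_pi_apply j).comp <| (measurable_pi_apply i).comp <|
    (measurable_subtype_coe (α := Matrix ι ι ℂ)).comp measurable_subtype_coe

lemma measurable_conj_apply (X : Matrix ι ι ℂ) (i j : ι) :
    Measurable fun U : H => (((U : unitaryGroup ι ℂ) : Matrix ι ι ℂ) * X *
      ((U : unitaryGroup ι ℂ) : Matrix ι ι ℂ)ᴴ) i j := by
  simp only [mul_mul_conjTranspose_apply]
  exact Finset.measurable_sum _ fun b _ => Finset.measurable_sum _ fun a _ =>
    ((measurable_coe_apply i a).mul_const _).mul
      (continuous_star.measurable.comp (measurable_coe_apply j b))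

lemma norm_conj_apply_le {U : Matrix ι ι ℂ} (hU : U ∈ unitaryGroup ι ℂ) (X : Matrix ι ι ℂ)
    (i j : ι) : ‖(U * X * Uᴴ) i j‖ ≤ ∑ b, ∑ a, ‖X a b‖ := by
  rw [mul_mul_conjTranspose_apply]
  refine (norm_sum_le _ _).trans (Finset.sum_le_sum fun b _ => ?_)
  refine (norm_sum_le _ _).trans (Finset.sum_le_sum fun a _ => ?_)
  calc ‖U i a * X a b * star (U j b)‖ = ‖U i a‖ * ‖X a b‖ * ‖U j b‖ := by
        rw [norm_mul, norm_mul, norm_star]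
    _ ≤ 1 * ‖X a b‖ * 1 := by
        gcongr <;> exact entry_norm_bound_of_unitary hU _ _
    _ = ‖X a b‖ := by ring

lemma integrable_conj_apply (μ : Measure H) [IsFiniteMeasure μ] (X : Matrix ι ι ℂ) (i j : ι) :
    Integrable (fun U : H => (((U : unitaryGroup ι ℂ) : Matrix ι ι ℂ) * X *
      ((U : unitaryGroup ι ℂ) : Matrix ι ι ℂ)ᴴ) i j) μ :=
  .of_bound (measurable_conj_apply X i j).aestronglyMeasurable _
    (ae_of_all _ fun U => norm_conj_apply_le U.1.2 X i j)

theorem isConjInvariant_twirl {μ : Measure H} [IsFiniteMeasure μ] [NeZero μ]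
    (hleft : ∀ P : H, μ.map (fun U => P * U) = μ) (X : Matrix ι ι ℂ) :
    IsConjInvariant H (twirl μ X) := by
  intro P
  ext i j
  set p : Matrix ι ι ℂ := ((P : unitaryGroup ι ℂ) : Matrix ι ι ℂ)
  have hint : ∀ a b, Integrable (fun U : H => p i a *
      (((U : unitaryGroup ι ℂ) : Matrix ι ι ℂ) * X * ((U : unitaryGroup ι ℂ) : Matrix ι ι ℂ)ᴴ) a b *
        star (p j b)) μ :=
    fun a b => ((integrable_conj_apply μ X a b).const_mul _).mul_const _
  calc (p * twirl μ X * pᴴ) i j = ∑ b, ∑ a, p i a * twirl μ X a b * star (p j b) :=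
        mul_mul_conjTranspose_apply _ _ _ i j
    _ = ∫ U : H, ∑ b, ∑ a, p i a * (((U : unitaryGroup ι ℂ) : Matrix ι ι ℂ) * X *
          ((U : unitaryGroup ι ℂ) : Matrix ι ι ℂ)ᴴ) a b * star (p j b) ∂μ := by
        rw [integral_finsetSum _ fun b _ => integrable_finsetSum _ fun a _ => hint a b]
        refine Finset.sum_congr rfl fun b _ => ?_
        rw [integral_finsetSum _ fun a _ => hint a b]
        refine Finset.sum_congr rfl fun a _ => ?_
        rw [integral_mul_const, integral_const_mul, twirl, of_apply]
    _ = ∫ U : H, ((((P * U : H) : unitaryGroup ι ℂ) : Matrix ι ι ℂ) * X *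
          (((P * U : H) : unitaryGroup ι ℂ) : Matrix ι ι ℂ)ᴴ) i j ∂μ := by
        congr with U
        rw [← mul_mul_conjTranspose_apply]
        simp only [Subgroup.coe_mul, Submonoid.coe_mul, conjTranspose_mul, p, mul_assoc]
    _ = twirl μ X i j :=
        integral_comp_eq_of_map_eq (hleft P) (measurable_conj_apply X i j).aestronglyMeasurable

theorem trace_twirl (μ : Measure H) [IsProbabilityMeasure μ] (X : Matrix ι ι ℂ) :
    (twirl μ X).trace = X.trace := by
  calc (twirl μ X).trace = ∫ U : H, (((U : unitaryGroup ι ℂ) : Matrix ι ι ℂ) * X *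
        ((U : unitaryGroup ι ℂ) : Matrix ι ι ℂ)ᴴ).trace ∂μ :=
        (integral_finsetSum _ fun i _ => integrable_conj_apply μ X i i).symm
    _ = ∫ _ : H, X.trace ∂μ := by
        congr with U
        rw [trace_mul_cycle, ← star_eq_conjTranspose, mem_unitaryGroup_iff'.1 U.1.2, one_mul]
    _ = X.trace := by simp

lemma twirl_vecMulVec_apply (μ : Measure H) (u v : ι → ℂ) (i j : ι) :
    twirl μ (vecMulVec u (star v)) i j =
      ∫ U : H, (((U : unitaryGroup ι ℂ) : Matrix ι ι ℂ) *ᵥ u) i *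
        star ((((U : unitaryGroup ι ℂ) : Matrix ι ι ℂ) *ᵥ v) j) ∂μ := by
  simp only [twirl, of_apply, mul_vecMulVec, vecMulVec_mul, ← star_mulVec, vecMulVec_apply,
    Pi.star_apply]

end Twirl

section HammingWeight

variable {n : ℕ}

lemma wt_le (f : Fin n → Bool) : wt f ≤ n :=
  (Finset.card_filter_le _ _).trans_eq (Finset.card_fin n)

lemma card_filter_wt_eq (w : ℕ) :
    (Finset.univ.filter fun f : Fin n → Bool => wt f = w).card = n.choose w := by
  trans (Finset.powersetCard w (Finset.univ : Finset (Fin n))).card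
  swap
  · rw [Finset.card_powersetCard, Finset.card_univ, Fintype.card_fin]
  refine Finset.card_nbij' (fun f => Finset.univ.filter fun i => f i = true)
    (fun s i => decide (i ∈ s)) ?_ ?_ ?_ ?_
  · intro f hf
    rw [Finset.mem_coe, Finset.mem_filter] at hf
    rw [Finset.mem_coe, Finset.mem_powersetCard]
    exact ⟨Finset.subset_univ _, hf.2⟩
  · intro s hs
    rw [Finset.mem_coe, Finset.mem_powersetCard] at hs
    rw [Finset.mem_coe, Finset.mem_filter]
    simpa [wt] using hs.2
  · intro f _
    funext i
    simp
  · intro s _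
    ext i
    simp

lemma wt_swap_apply {f g : Fin n → Bool} (hfg : wt f = wt g) (x : Fin n → Bool) :
    wt (Equiv.swap f g x) = wt x := by
  rcases eq_or_ne x f with rfl | hxf
  · rw [Equiv.swap_apply_left, hfg]
  rcases eq_or_ne x g with rfl | hxg
  · rw [Equiv.swap_apply_right, hfg]
  · rw [Equiv.swap_apply_of_ne_of_ne hxf hxg]

lemma coe_apply_eq_zero_of_wt_ne (U : u1SymmetricGroup n) {f g : Fin n → Bool}
    (h : wt f ≠ wt g) : ((U : unitaryGroup (Fin n → Bool) ℂ) : Matrix _ _ ℂ) f g = 0 :=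
  apply_eq_zero_of_commute_diagonal U.2 (by exact_mod_cast h)

lemma mulVec_apply_eq_zero_of_wt_ne (U : u1SymmetricGroup n) {w : ℕ} {u : (Fin n → Bool) → ℂ}
    (hu : ∀ f, wt f ≠ w → u f = 0) {f : Fin n → Bool} (hf : wt f ≠ w) :
    (((U : unitaryGroup (Fin n → Bool) ℂ) : Matrix _ _ ℂ) *ᵥ u) f = 0 := by
  refine Finset.sum_eq_zero fun g _ => ?_
  beta_reduce
  by_cases hg : wt g = w
  · rw [coe_apply_eq_zero_of_wt_ne U (hg ▸ hf), zero_mul]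
  · rw [hu g hg, mul_zero]

lemma twirl_vecMulVec_apply_eq_zero (μ : Measure (u1SymmetricGroup n)) {w w' : ℕ}
    {u v : (Fin n → Bool) → ℂ} (hu : ∀ f, wt f ≠ w → u f = 0) (hv : ∀ f, wt f ≠ w' → v f = 0)
    {f g : Fin n → Bool} (h : wt f ≠ w ∨ wt g ≠ w') : twirl μ (vecMulVec u (star v)) f g = 0 := by
  rw [twirl_vecMulVec_apply]
  refine integral_eq_zero_of_ae (ae_of_all _ fun U => ?_)
  dsimp only
  rcases h with h | h
  · rw [Pi.zero_apply, mulVec_apply_eq_zero_of_wt_ne U hu h, zero_mul]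
  · rw [Pi.zero_apply, mulVec_apply_eq_zero_of_wt_ne U hv h, star_zero, mul_zero]

lemma diagonal_mem_u1SymmetricGroup {d : (Fin n → Bool) → ℂ} (hd : ∀ f, star (d f) * d f = 1) :
    ⟨diagonal d, diagonal_mem_unitaryGroup hd⟩ ∈ u1SymmetricGroup n :=
  (commute_diagonal d _).eq

lemma permMatrix_mem_u1SymmetricGroup {σ : Equiv.Perm (Fin n → Bool)}
    (hσ : ∀ f, wt (σ f) = wt f) :
    ⟨σ.permMatrix ℂ, permMatrix_mem_unitaryGroup σ⟩ ∈ u1SymmetricGroup n := by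
  show σ.permMatrix ℂ * Qn n = Qn n * σ.permMatrix ℂ
  ext f g
  simp only [Qn, mul_diagonal, diagonal_mul, Equiv.Perm.permMatrix, PEquiv.toMatrix_apply,
    Equiv.toPEquiv_apply, Option.mem_def, Option.some.injEq]
  split_ifs with h
  · rw [← h, hσ, mul_comm]
  · simp

namespace IsConjInvariant

variable {T : Matrix (Fin n → Bool) (Fin n → Bool) ℂ}

lemma apply_eq_zero_of_ne (hT : IsConjInvariant (u1SymmetricGroup n) T) {f g : Fin n → Bool}
    (hfg : f ≠ g) : T f g = 0 := by
  obtain ⟨k, hk⟩ := Function.ne_iff.1 hfg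
  let d : (Fin n → Bool) → ℂ := fun x => if x k then -1 else 1
  have hd : ∀ x, star (d x) * d x = 1 := fun x => by by_cases hx : x k <;> simp [d, hx]
  have hdfg : d f * star (d g) = -1 := by
    cases hf : f k <;> cases hg : g k <;> simp_all [d]
  refine apply_eq_zero_of_diagonal_conj_eq (hT ⟨_, diagonal_mem_u1SymmetricGroup hd⟩) ?_
  rw [hdfg]
  norm_num

lemma apply_self_eq_of_wt_eq (hT : IsConjInvariant (u1SymmetricGroup n) T) {f g : Fin n → Bool}
    (h : wt f = wt g) : T g g = T f f := by
  simpa using apply_perm_of_permMatrix_conj_eq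
    (hT ⟨_, permMatrix_mem_u1SymmetricGroup (wt_swap_apply h)⟩) f f

lemma apply_self_eq_trace_div (hT : IsConjInvariant (u1SymmetricGroup n) T) {f : Fin n → Bool}
    (hsupp : ∀ g, wt g ≠ wt f → T g g = 0) :
    T f f = T.trace / n.choose (wt f) := by
  have hchoose : (n.choose (wt f) : ℂ) ≠ 0 := Nat.cast_ne_zero.2 (Nat.choose_pos (wt_le f)).ne'
  simp only [eq_div_iff hchoose, trace, diag_apply]
  rw [← Finset.sum_filter_of_ne fun g _ hg => not_not.1 (mt (hsupp g) hg),
    Finset.sum_congr rfl fun g hg => apply_self_eq_of_wt_eq hT (Finset.mem_filter.1 hg).2.symm,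
    Finset.sum_const, card_filter_wt_eq, nsmul_eq_mul, mul_comm]

end IsConjInvariant

end HammingWeight

theorem avg_outer_product_u1_general (n w w' : ℕ)
    (μ : Measure (u1SymmetricGroup n)) [IsProbabilityMeasure μ]
    (hleft : ∀ g : u1SymmetricGroup n, μ.map (fun x => g * x) = μ)
    (u v : (Fin n → Bool) → ℂ)
    (hu : ∀ f, wt f ≠ w → u f = 0) (hv : ∀ f, wt f ≠ w' → v f = 0)
    (M : Matrix (Fin n → Bool) (Fin n → Bool) ℂ)
    (hM : ∀ f g, M f g = u f * star (v g))
    (f g : Fin n → Bool) :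
    ∫ U : u1SymmetricGroup n,
        (((U : Matrix.unitaryGroup (Fin n → Bool) ℂ) : Matrix (Fin n → Bool) (Fin n → Bool) ℂ) *
          M * ((U : Matrix.unitaryGroup (Fin n → Bool) ℂ) :
            Matrix (Fin n → Bool) (Fin n → Bool) ℂ)ᴴ) f g ∂μ =
      (if w = w' then
          ((∑ f' : Fin n → Bool, star (v f') * u f') / (n.choose w : ℂ)) •
            Matrix.diagonal (fun f' : Fin n → Bool => if wt f' = w then (1 : ℂ) else 0)
        else 0) f g := by
  have hM' : M = vecMulVec u (star v) := ext fun f g => hM f g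
  have hT : IsConjInvariant (u1SymmetricGroup n) (twirl μ M) := isConjInvariant_twirl hleft M
  have hsupp : ∀ f, wt f ≠ w ∨ wt f ≠ w' → twirl μ M f f = 0 := fun f hf =>
    hM' ▸ twirl_vecMulVec_apply_eq_zero μ hu hv hf
  change twirl μ M f g = _
  rcases ne_or_eq f g with hfg | rfl
  · rw [hT.apply_eq_zero_of_ne hfg]
    split_ifs <;> simp [hfg]
  split_ifs with hw
  swap
  · exact hsupp f (by omega)
  subst hw
  rw [Matrix.smul_apply, diagonal_apply_eq, smul_eq_mul]
  split_ifs with hf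
  · subst hf
    rw [hT.apply_self_eq_trace_div fun g hg => hsupp g (.inl hg), trace_twirl, hM',
      trace_vecMulVec, dotProduct_comm, mul_one]
    rfl
  · rw [mul_zero, hsupp f (.inl hf)]

/-- **Average conjugated outer product over Hamming-weight-preserving unitaries**
(Eq. (eq:avg-rhoxx)): for a bi-invariant probability measure on the group of charge-conserving
unitaries, the twirl of an outer product `|u⟩⟨v|` of states of definite Hamming weights `w`, `w'`
vanishes if `w ≠ w'` and equals `(⟨v|u⟩ / C(n,w))` times the weight-`w` projector if `w = w'`
(entrywise Bochner integrals). -/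
theorem avg_outer_product_u1 (n w w' : ℕ)
    (μ : Measure (u1SymmetricGroup n)) [IsProbabilityMeasure μ]
    (hleft : ∀ g : u1SymmetricGroup n, μ.map (fun x => g * x) = μ)
    (hright : ∀ g : u1SymmetricGroup n, μ.map (fun x => x * g) = μ)
    (u v : (Fin n → Bool) → ℂ)
    (hu : ∀ f, wt f ≠ w → u f = 0) (hv : ∀ f, wt f ≠ w' → v f = 0)
    (M : Matrix (Fin n → Bool) (Fin n → Bool) ℂ)
    (hM : ∀ f g, M f g = u f * star (v g))
    (f g : Fin n → Bool) :
    ∫ U : u1SymmetricGroup n,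
        (((U : Matrix.unitaryGroup (Fin n → Bool) ℂ) : Matrix (Fin n → Bool) (Fin n → Bool) ℂ) *
          M * ((U : Matrix.unitaryGroup (Fin n → Bool) ℂ) :
            Matrix (Fin n → Bool) (Fin n → Bool) ℂ)ᴴ) f g ∂μ =
      (if w = w' then
          ((∑ f' : Fin n → Bool, star (v f') * u f') / (n.choose w : ℂ)) •
            Matrix.diagonal (fun f' : Fin n → Bool => if wt f' = w then (1 : ℂ) else 0)
        else 0) f g :=
  avg_outer_product_u1_general n w w' μ hleft u v hu hv M hM f g
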